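/- arXiv:1503.00322 — 8 statements merged into one kernel-verified Lean document; each statement's English description precedes it below -/
import Mathlib

section
/- Let P be an n×n real column-stochastic matrix that is irreducible in the sense that for every pair of indices i, j there exists k ≥ 0 with (P^k)_{ij} > 0, let α ∈ (0,1), and let v be a stochastic vector. Then every entry of the PageRank vector x solving (I − αP)x = (1−α)v is strictly positive. -/
open Matrix

theorem pagerank_vector_pos_of_irreducible {n : ℕ} (P : Matrix (Fin n) (Fin n) ℝ)
    (hP0 : ∀ i j, 0 ≤ P i j) (hP1 : ∀ j, ∑ i, P i j = 1)
    (hirr : ∀ i j, ∃ k : ℕ, 0 < (P ^ k) i j)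
    (α : ℝ) (hα0 : 0 < α) (hα1 : α < 1)
    (v : Fin n → ℝ) (hv0 : ∀ i, 0 ≤ v i) (hv1 : ∑ i, v i = 1)
    (x : Fin n → ℝ) (hx : (1 - α • P) *ᵥ x = (1 - α) • v) :
    ∀ i, 0 < x i := by
  -- Componentwise fixed-point identity: x i = α * (P x)_i + (1-α) v i
  have hfix : ∀ i, x i = α * (∑ j, P i j * x j) + (1 - α) * v i := by
    intro i
    have h := congrFun hx i
    rw [sub_mulVec, one_mulVec, smul_mulVec] at h
    have h2 : x i - α * (P *ᵥ x) i = (1 - α) * v i := by simpa using h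
    have h3 : (P *ᵥ x) i = ∑ j, P i j * x j := rfl
    rw [h3] at h2
    linarith
  -- nonnegativity of entries of powers of P
  have hpow : ∀ k i j, 0 ≤ (P ^ k) i j := by
    intro k
    induction k with
    | zero => intro i j; simp [Matrix.one_apply]; positivity
    | succ k ih =>
      intro i j
      rw [pow_succ, Matrix.mul_apply]
      exact Finset.sum_nonneg fun l _ => mul_nonneg (ih i l) (hP0 l j)
  -- x is entrywise nonnegative
  have hxnn : ∀ i, 0 ≤ x i := by
    by_contra h
    push_neg at h
    obtain ⟨i0, hi0⟩ := h
    set S := Finset.univ.filter (fun i => x i < 0) with hS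
    have hi0S : i0 ∈ S := by simp [hS, hi0]
    have hNneg : ∑ i ∈ S, x i < 0 := by
      apply Finset.sum_neg (fun i hi => by simpa [hS] using hi) ⟨i0, hi0S⟩
    -- sum over S of (Px)_i is at least sum over S of x
    have hswap : ∑ i ∈ S, ∑ j, P i j * x j = ∑ j, (∑ i ∈ S, P i j) * x j := by
      rw [Finset.sum_comm]
      exact Finset.sum_congr rfl fun j _ => by rw [Finset.sum_mul]
    have hcj1 : ∀ j, ∑ i ∈ S, P i j ≤ 1 := by
      intro j
      calc ∑ i ∈ S, P i j ≤ ∑ i, P i j :=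
            Finset.sum_le_sum_of_subset_of_nonneg (Finset.subset_univ S)
              (fun i _ _ => hP0 i j)
        _ = 1 := hP1 j
    have hcj0 : ∀ j, 0 ≤ ∑ i ∈ S, P i j := fun j =>
      Finset.sum_nonneg fun i _ => hP0 i j
    have hT : ∑ i ∈ S, x i ≤ ∑ i ∈ S, ∑ j, P i j * x j := by
      rw [hswap]
      have heq : ∑ i ∈ S, x i = ∑ j, (if x j < 0 then x j else 0) := by
        rw [hS, Finset.sum_filter]
      rw [heq]
      apply Finset.sum_le_sum
      intro j _
      by_cases hj : x j < 0
      · simp only [hj, if_true]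
        nlinarith [hcj1 j]
      · simp only [hj, if_false]
        push_neg at hj
        exact mul_nonneg (hcj0 j) hj
    have hV : 0 ≤ ∑ i ∈ S, v i := Finset.sum_nonneg fun i _ => hv0 i
    have hNeq : ∑ i ∈ S, x i
        = α * (∑ i ∈ S, ∑ j, P i j * x j) + (1 - α) * ∑ i ∈ S, v i := by
      rw [Finset.mul_sum, Finset.mul_sum, ← Finset.sum_add_distrib]
      exact Finset.sum_congr rfl fun i _ => hfix i
    nlinarith [hT, hV, hNeq, hNneg]
  -- lower bound by terms of the Neumann series
  have hL : ∀ k i, (1 - α) * α ^ k * (∑ j, (P ^ k) i j * v j) ≤ x i := by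
    intro k
    induction k with
    | zero =>
      intro i
      have hPx : 0 ≤ ∑ j, P i j * x j :=
        Finset.sum_nonneg fun j _ => mul_nonneg (hP0 i j) (hxnn j)
      have : (∑ j, (P ^ 0) i j * v j) = v i := by
        simp [Matrix.one_apply]
      rw [this, hfix i]
      nlinarith
    | succ k ih =>
      intro i
      have key : (1 - α) * α ^ (k + 1) * (∑ j, (P ^ (k + 1)) i j * v j)
          ≤ α * ∑ j, P i j * x j := by
        have step : ∀ j, P i j * ((1 - α) * α ^ k * (∑ l, (P ^ k) j l * v l))
            ≤ P i j * x j := fun j =>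
          mul_le_mul_of_nonneg_left (ih j) (hP0 i j)
        calc (1 - α) * α ^ (k + 1) * (∑ j, (P ^ (k + 1)) i j * v j)
            = α * ∑ j, P i j * ((1 - α) * α ^ k * (∑ l, (P ^ k) j l * v l)) := by
              rw [pow_succ' P k]
              simp only [Matrix.mul_apply, Finset.sum_mul, Finset.mul_sum]
              rw [Finset.sum_comm]
              apply Finset.sum_congr rfl
              intro j _
              apply Finset.sum_congr rfl
              intro l _
              ring
          _ ≤ α * ∑ j, P i j * x j := by
              apply mul_le_mul_of_nonneg_left _ hα0.le
              exact Finset.sum_le_sum fun j _ => step j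
      have hvi : 0 ≤ (1 - α) * v i := mul_nonneg (by linarith) (hv0 i)
      rw [hfix i]
      linarith
  -- pick a positive entry of v
  have hvpos : ∃ j, 0 < v j := by
    by_contra h
    push_neg at h
    have : ∑ i, v i = 0 := Finset.sum_eq_zero fun i _ => le_antisymm (h i) (hv0 i)
    rw [hv1] at this; norm_num at this
  obtain ⟨j, hj⟩ := hvpos
  intro i
  obtain ⟨k, hk⟩ := hirr i j
  have hsum : (P ^ k) i j * v j ≤ ∑ l, (P ^ k) i l * v l :=
    Finset.single_le_sum (fun l _ => mul_nonneg (hpow k i l) (hv0 l))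
      (Finset.mem_univ j)
  have h1 : 0 < (1 - α) * α ^ k * ((P ^ k) i j * v j) :=
    mul_pos (mul_pos (by linarith) (pow_pos hα0 k)) (mul_pos hk hj)
  have h2 : (1 - α) * α ^ k * ((P ^ k) i j * v j)
      ≤ (1 - α) * α ^ k * (∑ l, (P ^ k) i l * v l) :=
    mul_le_mul_of_nonneg_left hsum
      (mul_nonneg (by linarith) (pow_pos hα0 k).le)
  linarith [hL k i]
end

section
/- Let A be a symmetric n×n real nonnegative matrix with positive row sums d_i, D = diag(d_i), P = A D^{-1}, α ∈ (0,1), and v a stochastic vector. Let x solve (I − αP)x = (1−α)v. Suppose ŷ is a vector whose residual r = D^{-1}v − (I − αPᵀ)ŷ satisfies ‖r‖∞ < ε, and set x̂ = (1−α)D ŷ. Then ‖D^{-1}(x − x̂)‖∞ < ε, i.e., |x_j − x̂_j| < ε d_j for every j. -/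
/-!
Put `w = D⁻¹(x - x̂)`. Symmetry of `A` gives `D⁻¹P = PᵀD⁻¹`, and with it the two linear systems
combine into `w = α Pᵀ w + (1 - α) r`. The matrix `Pᵀ = D⁻¹A` is row-stochastic, so it does not
increase the sup norm, whence `‖w‖∞ ≤ α ‖w‖∞ + (1 - α) ‖r‖∞`, i.e. `‖w‖∞ ≤ ‖r‖∞ < ε`.
-/

open Matrix

theorem scaled_error_fixed_point {n R : Type*} [Fintype n] [DecidableEq n] [CommRing R]
    {P S E : Matrix n n R} (hSE : S * E = 1)
    (hSP : S * P = Pᵀ * S) {α : R} {x v y : n → R}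
    (hx : (1 - α • P) *ᵥ x = (1 - α) • v) :
    S *ᵥ (x - (1 - α) • (E *ᵥ y)) =
      α • (Pᵀ *ᵥ (S *ᵥ (x - (1 - α) • (E *ᵥ y)))) +
        (1 - α) • (S *ᵥ v - (1 - α • Pᵀ) *ᵥ y) := by
  have hx' : x = α • (P *ᵥ x) + (1 - α) • v := by
    rw [← hx, sub_mulVec, one_mulVec, smul_mulVec]; abel
  have hSx : S *ᵥ x = α • (Pᵀ *ᵥ (S *ᵥ x)) + (1 - α) • (S *ᵥ v) := by
    conv_lhs => rw [hx']
    rw [mulVec_add, mulVec_smul, mulVec_smul, mulVec_mulVec, hSP, ← mulVec_mulVec]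
  simp only [mulVec_sub, mulVec_smul, mulVec_mulVec, hSE, one_mulVec, sub_mulVec, smul_mulVec]
  rw [← mulVec_mulVec]
  conv_lhs => rw [hSx]
  module

theorem norm_mulVec_le_of_mem_rowStochastic {n : Type*} [Fintype n] [DecidableEq n]
    {M : Matrix n n ℝ} (hM : M ∈ rowStochastic ℝ n) (w : n → ℝ) : ‖M *ᵥ w‖ ≤ ‖w‖ := by
  refine (pi_norm_le_iff_of_nonneg (norm_nonneg w)).2 fun i => ?_
  calc ‖(M *ᵥ w) i‖ ≤ ∑ j, ‖M i j * w j‖ := norm_sum_le _ _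
    _ ≤ ∑ j, M i j * ‖w‖ := by
        gcongr with j
        rw [norm_mul, Real.norm_of_nonneg (nonneg_of_mem_rowStochastic hM)]
        exact mul_le_mul_of_nonneg_left (norm_le_pi_norm w j) (nonneg_of_mem_rowStochastic hM)
    _ = ‖w‖ := by rw [← Finset.sum_mul, sum_row_of_mem_rowStochastic hM, one_mul]

theorem diagonal_inv_mul_mem_rowStochastic {n : Type*} [Fintype n] [DecidableEq n]
    {A : Matrix n n ℝ} (hA0 : ∀ i j, 0 ≤ A i j) {d : n → ℝ} (hd : ∀ i, d i = ∑ j, A i j)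
    (hdpos : ∀ i, 0 < d i) : (diagonal fun i => (d i)⁻¹) * A ∈ rowStochastic ℝ n := by
  refine mem_rowStochastic_iff_sum.2 ⟨fun i j => ?_, fun i => ?_⟩
  · rw [diagonal_mul]; exact mul_nonneg (inv_nonneg.2 (hdpos i).le) (hA0 i j)
  · simp only [diagonal_mul, ← Finset.mul_sum, ← hd, inv_mul_cancel₀ (hdpos i).ne']

theorem norm_le_of_eq_smul_add_smul {E : Type*} [SeminormedAddCommGroup E] [NormedSpace ℝ E]
    {w u r : E} {α : ℝ} (hα0 : 0 ≤ α) (hα1 : α < 1) (hu : ‖u‖ ≤ ‖w‖)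
    (hw : w = α • u + (1 - α) • r) : ‖w‖ ≤ ‖r‖ := by
  have h : ‖w‖ ≤ α * ‖w‖ + (1 - α) * ‖r‖ :=
    calc ‖w‖ ≤ ‖α • u‖ + ‖(1 - α) • r‖ := hw ▸ norm_add_le _ _
      _ = α * ‖u‖ + (1 - α) * ‖r‖ := by
        rw [norm_smul, norm_smul, Real.norm_of_nonneg hα0, Real.norm_of_nonneg (by linarith)]
      _ ≤ α * ‖w‖ + (1 - α) * ‖r‖ := by gcongr
  nlinarith

theorem push_accuracy_bound_general {n : ℕ} (A : Matrix (Fin n) (Fin n) ℝ)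
    (hAsymm : A.IsSymm) (hA0 : ∀ i j, 0 ≤ A i j)
    (d : Fin n → ℝ) (hd : ∀ i, d i = ∑ j, A i j) (hdpos : ∀ i, 0 < d i)
    (α : ℝ) (hα0 : 0 < α) (hα1 : α < 1)
    (v : Fin n → ℝ)
    (x : Fin n → ℝ)
    (hx : (1 - α • (A * diagonal fun i => (d i)⁻¹)) *ᵥ x = (1 - α) • v)
    (yhat : Fin n → ℝ) (ε : ℝ) (r : Fin n → ℝ)
    (hr : r = (diagonal fun i => (d i)⁻¹) *ᵥ v -
      (1 - α • (A * diagonal fun i => (d i)⁻¹)ᵀ) *ᵥ yhat)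
    (hrε : ‖r‖ < ε)
    (xhat : Fin n → ℝ) (hxhat : xhat = (1 - α) • (diagonal d *ᵥ yhat)) :
    ‖(diagonal fun i => (d i)⁻¹) *ᵥ (x - xhat)‖ < ε ∧
    ∀ j, |x j - xhat j| < ε * d j := by
  set S : Matrix (Fin n) (Fin n) ℝ := diagonal fun i => (d i)⁻¹
  have hPT : (A * S)ᵀ = S * A := by rw [transpose_mul, diagonal_transpose, hAsymm.eq]
  have hSE : S * diagonal d = 1 := by
    rw [diagonal_mul_diagonal, ← diagonal_one]
    exact congrArg diagonal (funext fun i => inv_mul_cancel₀ (hdpos i).ne')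
  have hSP : S * (A * S) = (A * S)ᵀ * S := by rw [hPT, mul_assoc]
  have hPT_stoch : (A * S)ᵀ ∈ rowStochastic ℝ (Fin n) :=
    hPT ▸ diagonal_inv_mul_mem_rowStochastic hA0 hd hdpos
  have herr : ‖S *ᵥ (x - xhat)‖ < ε := by
    subst hr hxhat
    exact (norm_le_of_eq_smul_add_smul hα0.le hα1
      (norm_mulVec_le_of_mem_rowStochastic hPT_stoch _)
      (scaled_error_fixed_point hSE hSP hx)).trans_lt hrε
  refine ⟨herr, fun j => ?_⟩
  have hj : |(d j)⁻¹ * (x j - xhat j)| < ε := by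
    simpa [S, mulVec_diagonal] using (norm_le_pi_norm (S *ᵥ (x - xhat)) j).trans_lt herr
  rwa [abs_mul, abs_inv, abs_of_pos (hdpos j), inv_mul_lt_iff₀ (hdpos j), mul_comm] at hj

theorem push_accuracy_bound {n : ℕ} (A : Matrix (Fin n) (Fin n) ℝ)
    (hAsymm : A.IsSymm) (hA0 : ∀ i j, 0 ≤ A i j)
    (d : Fin n → ℝ) (hd : ∀ i, d i = ∑ j, A i j) (hdpos : ∀ i, 0 < d i)
    (α : ℝ) (hα0 : 0 < α) (hα1 : α < 1)
    (v : Fin n → ℝ) (hv0 : ∀ i, 0 ≤ v i) (hv1 : ∑ i, v i = 1)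
    (x : Fin n → ℝ)
    (hx : (1 - α • (A * diagonal fun i => (d i)⁻¹)) *ᵥ x = (1 - α) • v)
    (yhat : Fin n → ℝ) (ε : ℝ) (r : Fin n → ℝ)
    (hr : r = (diagonal fun i => (d i)⁻¹) *ᵥ v -
      (1 - α • (A * diagonal fun i => (d i)⁻¹)ᵀ) *ᵥ yhat)
    (hrε : ‖r‖ < ε)
    (xhat : Fin n → ℝ) (hxhat : xhat = (1 - α) • (diagonal d *ᵥ yhat)) :
    ‖(diagonal fun i => (d i)⁻¹) *ᵥ (x - xhat)‖ < ε ∧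
    ∀ j, |x j - xhat j| < ε * d j :=
  push_accuracy_bound_general A hAsymm hA0 d hd hdpos α hα0 hα1 v x hx yhat ε r hr hrε xhat hxhat
end

section
/- Let A be a symmetric n×n real nonnegative matrix with positive row sums d_i, D = diag(d_i), P = A D^{-1}, α ∈ (0,1), and v a stochastic vector, and let x solve (I − αP)x = (1−α)v. If ŷ is a vector whose residual r = D^{-1}v − (I − αPᵀ)ŷ has all entries nonnegative and satisfies ‖r‖∞ < ε, then the vector x̂ = (1−α)D ŷ satisfies the accuracy guarantee 0 ≤ x_j − x̂_j < ε d_j for every index j. -/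
open Matrix

theorem push_accuracy_guarantee {n : ℕ} (A : Matrix (Fin n) (Fin n) ℝ)
    (hAsymm : A.IsSymm) (hA0 : ∀ i j, 0 ≤ A i j)
    (d : Fin n → ℝ) (hd : ∀ i, d i = ∑ j, A i j) (hdpos : ∀ i, 0 < d i)
    (α : ℝ) (hα0 : 0 < α) (hα1 : α < 1)
    (v : Fin n → ℝ) (hv0 : ∀ i, 0 ≤ v i) (hv1 : ∑ i, v i = 1)
    (x : Fin n → ℝ)
    (hx : (1 - α • (A * diagonal fun i => (d i)⁻¹)) *ᵥ x = (1 - α) • v)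
    (yhat : Fin n → ℝ) (ε : ℝ) (r : Fin n → ℝ)
    (hr : r = (diagonal fun i => (d i)⁻¹) *ᵥ v -
      (1 - α • (A * diagonal fun i => (d i)⁻¹)ᵀ) *ᵥ yhat)
    (hr0 : ∀ i, 0 ≤ r i) (hrε : ‖r‖ < ε)
    (xhat : Fin n → ℝ) (hxhat : xhat = (1 - α) • (diagonal d *ᵥ yhat)) :
    ∀ j, 0 ≤ x j - xhat j ∧ x j - xhat j < ε * d j := by
  have hdne : ∀ i, d i ≠ 0 := fun i => (hdpos i).ne'
  -- pointwise form of hx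
  have hxp : ∀ i, x i - α * ∑ k, A i k * (d k)⁻¹ * x k = (1 - α) * v i := by
    intro i
    have hexp : ((1 - α • (A * diagonal fun i => (d i)⁻¹)) *ᵥ x) i
        = x i - α * ∑ k, A i k * (d k)⁻¹ * x k := by
      simp [sub_mulVec, smul_mulVec, one_mulVec, mulVec, dotProduct, mul_diagonal,
        Finset.mul_sum, sub_mul, Finset.sum_sub_distrib, Matrix.one_apply, Finset.sum_ite_eq,
        mul_assoc]
    have h := congrFun hx i
    rw [hexp] at h
    simpa using h
  -- pointwise form of hr
  have hrp : ∀ i, r i = (d i)⁻¹ * v i -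
      (yhat i - α * (d i)⁻¹ * ∑ k, A i k * yhat k) := by
    intro i
    have h := congrFun hr i
    rw [h]
    simp only [Pi.sub_apply]
    congr 1
    · simp [mulVec_diagonal]
    · simp only [mulVec, dotProduct, Matrix.sub_apply, Matrix.smul_apply, transpose_apply,
        mul_diagonal, Matrix.one_apply, smul_eq_mul, sub_mul, ite_mul, one_mul, zero_mul,
        Finset.sum_sub_distrib, Finset.sum_ite_eq, Finset.mem_univ, if_pos, Finset.mul_sum]
      congr 1
      refine Finset.sum_congr rfl fun k _ => ?_
      rw [hAsymm.apply]
      ring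
  have hxhp : ∀ i, xhat i = (1 - α) * (d i * yhat i) := by
    intro i
    rw [hxhat]
    simp [mulVec_diagonal]
  -- the weighted error vector
  set w : Fin n → ℝ := fun k => (x k - xhat k) / d k with hwdef
  have hzw : ∀ k, x k - xhat k = d k * w k := by
    intro k
    rw [hwdef]
    simp only
    rw [mul_div_cancel₀ _ (hdne k)]
  -- key identity
  have key : ∀ i, d i * w i = α * (∑ k, A i k * w k) + (1 - α) * (d i * r i) := by
    intro i
    have hdd : d i * (d i)⁻¹ = 1 := mul_inv_cancel₀ (hdne i)
    have e1 := hxp i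
    have e2 : d i * r i = v i - d i * yhat i + α * ∑ k, A i k * yhat k := by
      rw [hrp i]
      linear_combination (v i + α * ∑ k, A i k * yhat k) * hdd
    have esum : ∑ k, A i k * w k =
        (∑ k, A i k * (d k)⁻¹ * x k) - (1 - α) * ∑ k, A i k * yhat k := by
      rw [Finset.mul_sum, ← Finset.sum_sub_distrib]
      refine Finset.sum_congr rfl fun k _ => ?_
      have hddk : d k * (d k)⁻¹ = 1 := mul_inv_cancel₀ (hdne k)
      rw [hwdef]
      simp only
      rw [hxhp k, div_eq_mul_inv]
      linear_combination (-(1 - α) * A i k * yhat k) * hddk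
    rw [← hzw i, esum, e2, hxhp i]
    nlinarith [e1]
  -- row sums
  have hrow : ∀ i, ∑ k, A i k = d i := fun i => (hd i).symm
  intro j
  have hne : (Finset.univ : Finset (Fin n)).Nonempty := ⟨j, Finset.mem_univ j⟩
  -- minimum of w is nonnegative
  obtain ⟨j0, -, hj0⟩ := Finset.exists_min_image Finset.univ w hne
  have hj0' : ∀ k, w j0 ≤ w k := fun k => hj0 k (Finset.mem_univ k)
  have hmin : 0 ≤ w j0 := by
    have hsum : d j0 * w j0 ≤ ∑ k, A j0 k * w k := by
      calc d j0 * w j0 = ∑ k, A j0 k * w j0 := by rw [← Finset.sum_mul, hrow]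
        _ ≤ ∑ k, A j0 k * w k :=
          Finset.sum_le_sum fun k _ => mul_le_mul_of_nonneg_left (hj0' k) (hA0 j0 k)
    have hk := key j0
    have hr0' := hr0 j0
    have hs' : α * (d j0 * w j0) ≤ α * ∑ k, A j0 k * w k :=
      mul_le_mul_of_nonneg_left hsum hα0.le
    nlinarith [mul_pos (sub_pos.2 hα1) (hdpos j0),
      mul_nonneg (mul_nonneg (sub_nonneg.2 hα1.le) (hdpos j0).le) hr0']
  -- maximum of w is < ε
  obtain ⟨j1, -, hj1⟩ := Finset.exists_max_image Finset.univ w hne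
  have hj1' : ∀ k, w k ≤ w j1 := fun k => hj1 k (Finset.mem_univ k)
  have hrj1 : r j1 < ε := by
    have h1 : r j1 ≤ |r j1| := le_abs_self _
    have h2 : |r j1| ≤ ‖r‖ := by
      have := norm_le_pi_norm r j1
      simpa [Real.norm_eq_abs] using this
    linarith
  have hmax : w j1 < ε := by
    have hsum : ∑ k, A j1 k * w k ≤ d j1 * w j1 := by
      calc ∑ k, A j1 k * w k ≤ ∑ k, A j1 k * w j1 :=
            Finset.sum_le_sum fun k _ => mul_le_mul_of_nonneg_left (hj1' k) (hA0 j1 k)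
        _ = d j1 * w j1 := by rw [← Finset.sum_mul, hrow]
    have hk := key j1
    have hs' : α * ∑ k, A j1 k * w k ≤ α * (d j1 * w j1) :=
      mul_le_mul_of_nonneg_left hsum hα0.le
    have hw1 : w j1 ≤ r j1 := by
      nlinarith [mul_pos (sub_pos.2 hα1) (hdpos j1)]
    linarith
  refine ⟨?_, ?_⟩
  · rw [hzw j]
    exact mul_nonneg (hdpos j).le (le_trans hmin (hj0' j))
  · rw [hzw j]
    calc d j * w j ≤ d j * w j1 := mul_le_mul_of_nonneg_left (hj1' j) (hdpos j).le
      _ < d j * ε := mul_lt_mul_of_pos_left hmax (hdpos j)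
      _ = ε * d j := mul_comm _ _
end

section
/- Let P be an n×n real column-stochastic matrix, α ∈ (0,1), ρ ∈ [0,1), and ε > 0. Suppose r ∈ ℝⁿ has all entries nonnegative and r_j ≥ ε for some index j (so that δ = r_j − ρε ≥ (1−ρ)ε > 0). Then the updated residual r' = r − δ(I − αPᵀ)e_j has all entries nonnegative; specifically r'_j = ρε + αδ(Pᵀ)_{jj} ≥ ρε and r'_i = r_i + αδ(Pᵀ)_{ij} ≥ r_i for i ≠ j. -/
open Matrix

theorem push_step_residual_nonneg {n : ℕ} (P : Matrix (Fin n) (Fin n) ℝ)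
    (hP0 : ∀ i j, 0 ≤ P i j) (hP1 : ∀ j, ∑ i, P i j = 1)
    (α ρ ε : ℝ) (hα0 : 0 < α) (hα1 : α < 1) (hρ0 : 0 ≤ ρ) (hρ1 : ρ < 1) (hε : 0 < ε)
    (r : Fin n → ℝ) (hr0 : ∀ i, 0 ≤ r i) (j : Fin n) (hrj : ε ≤ r j)
    (δ : ℝ) (hδ : δ = r j - ρ * ε)
    (r' : Fin n → ℝ)
    (hr' : r' = r - δ • ((1 - α • Pᵀ) *ᵥ (Pi.single j 1 : Fin n → ℝ))) :
    (∀ i, 0 ≤ r' i) ∧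
    (r' j = ρ * ε + α * δ * Pᵀ j j ∧ ρ * ε ≤ r' j) ∧
    (∀ i, i ≠ j → r' i = r i + α * δ * Pᵀ i j ∧ r i ≤ r' i) := by
  have hval : ∀ i, r' i = r i - δ * ((if i = j then 1 else 0) - α * Pᵀ i j) := by
    intro i
    rw [hr']
    simp [mulVec, dotProduct, Pi.single_apply, Matrix.one_apply, Matrix.sub_apply,
      Matrix.smul_apply, mul_ite, Finset.sum_ite_eq', sub_mul, ite_mul]
  have hδ0 : 0 < δ := by
    have : ρ * ε < 1 * ε := by
      apply mul_lt_mul_of_pos_right hρ1 hε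
    nlinarith
  have hPt : ∀ i, 0 ≤ Pᵀ i j := fun i => hP0 j i
  have hj : r' j = ρ * ε + α * δ * Pᵀ j j := by
    rw [hval j]; simp; nlinarith [hPt j]
  have hi : ∀ i, i ≠ j → r' i = r i + α * δ * Pᵀ i j := by
    intro i hij
    rw [hval i, if_neg hij]; ring
  have hnn : ∀ i, 0 ≤ α * δ * Pᵀ i j :=
    fun i => mul_nonneg (mul_nonneg hα0.le hδ0.le) (hPt i)
  have hjle : ρ * ε ≤ r' j := by
    rw [hj]; linarith [hnn j]
  refine ⟨?_, ⟨hj, hjle⟩, fun i hij => ⟨hi i hij, ?_⟩⟩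
  · intro i
    by_cases hij : i = j
    · subst hij
      exact le_trans (mul_nonneg hρ0 hε.le) hjle
    · rw [hi i hij]
      linarith [hnn i, hr0 i]
  · rw [hi i hij]
    linarith [hnn i]
end

section
/- Let A be a symmetric n×n real nonnegative matrix with positive row sums d_i, D = diag(d_i), P = A D^{-1}, α ∈ (0,1), and v a stochastic vector. If y is a vector with nonnegative entries whose residual r = D^{-1}v − (I − αPᵀ)y also has all entries nonnegative, then the vector x = (1−α)D y satisfies Σ_i x_i ≤ 1. -/
/-!
Multiplying the residual by `D` gives `D r = v - D y + α Aᵀ y`, and the entries of `Aᵀ y` sum to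
those of `D y` because `d` holds the row sums of `A`. Hence `∑ D r = ∑ v - ∑ x`: the mass of `v`
splits between the approximation and the residual, and `r ≥ 0` leaves `∑ x ≤ 1`.
-/

open Matrix

section

variable {ι R : Type*} [Fintype ι]

theorem sum_transpose_mulVec [CommSemiring R] (A : Matrix ι ι R) (y : ι → R) :
    ∑ i, (Aᵀ *ᵥ y) i = ∑ i, (∑ j, A i j) * y i := by
  rw [← one_dotProduct, dotProduct_mulVec, vecMul_transpose, dotProduct]
  simp only [mulVec, dotProduct, Pi.one_apply, mul_one]

variable [DecidableEq ι] [Field R]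

theorem diagonal_mul_transpose_mul_diagonal_inv (A : Matrix ι ι R) {d : ι → R}
    (hd : ∀ i, d i ≠ 0) :
    diagonal d * (A * diagonal fun i => (d i)⁻¹)ᵀ = Aᵀ := by
  rw [transpose_mul, diagonal_transpose, ← Matrix.mul_assoc, diagonal_mul_diagonal]
  simp only [mul_inv_cancel₀ (hd _), diagonal_one, one_mul]

theorem diagonal_mulVec_residual (A : Matrix ι ι R) {d : ι → R} (hd : ∀ i, d i ≠ 0)
    (α : R) (v y : ι → R) :
    diagonal d *ᵥ ((diagonal fun i => (d i)⁻¹) *ᵥ v -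
      (1 - α • (A * diagonal fun i => (d i)⁻¹)ᵀ) *ᵥ y) =
      v - diagonal d *ᵥ y + α • (Aᵀ *ᵥ y) := by
  rw [mulVec_sub, mulVec_mulVec, diagonal_mul_diagonal, sub_mulVec, mulVec_sub, one_mulVec,
    smul_mulVec, mulVec_smul, mulVec_mulVec, diagonal_mul_transpose_mul_diagonal_inv A hd]
  simp only [mul_inv_cancel₀ (hd _), diagonal_one, one_mulVec]
  abel

theorem sum_diagonal_mulVec_residual (A : Matrix ι ι R) {d : ι → R}
    (hrow : ∀ i, d i = ∑ j, A i j) (hd : ∀ i, d i ≠ 0) (α : R) (v y : ι → R) :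
    ∑ i, (diagonal d *ᵥ ((diagonal fun i => (d i)⁻¹) *ᵥ v -
      (1 - α • (A * diagonal fun i => (d i)⁻¹)ᵀ) *ᵥ y)) i =
      ∑ i, v i - (1 - α) * ∑ i, (diagonal d *ᵥ y) i := by
  have hAy : ∑ i, (Aᵀ *ᵥ y) i = ∑ i, (diagonal d *ᵥ y) i := by
    simp only [sum_transpose_mulVec, ← hrow, mulVec_diagonal]
  rw [diagonal_mulVec_residual A hd]
  simp only [Pi.add_apply, Pi.sub_apply, Pi.smul_apply, smul_eq_mul, Finset.sum_add_distrib,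
    Finset.sum_sub_distrib, ← Finset.mul_sum, hAy]
  ring

end

theorem push_mass_bound_general {n : ℕ} (A : Matrix (Fin n) (Fin n) ℝ)
    (d : Fin n → ℝ) (hd : ∀ i, d i = ∑ j, A i j) (hdpos : ∀ i, 0 < d i)
    (α : ℝ)
    (v : Fin n → ℝ) (hv1 : ∑ i, v i = 1)
    (y : Fin n → ℝ) (r : Fin n → ℝ)
    (hr : r = (diagonal fun i => (d i)⁻¹) *ᵥ v -
      (1 - α • (A * diagonal fun i => (d i)⁻¹)ᵀ) *ᵥ y)
    (hr0 : ∀ i, 0 ≤ r i)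
    (x : Fin n → ℝ) (hx : x = (1 - α) • (diagonal d *ᵥ y)) :
    ∑ i, x i ≤ 1 := by
  have hmass := sum_diagonal_mulVec_residual A hd (fun i => (hdpos i).ne') α v y
  rw [← hr, hv1] at hmass
  have hDr : 0 ≤ ∑ i, (diagonal d *ᵥ r) i := Finset.sum_nonneg fun i _ => by
    rw [mulVec_diagonal]
    exact mul_nonneg (hdpos i).le (hr0 i)
  rw [hx]
  simp only [Pi.smul_apply, smul_eq_mul, ← Finset.mul_sum]
  linarith

theorem push_mass_bound {n : ℕ} (A : Matrix (Fin n) (Fin n) ℝ)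
    (hAsymm : A.IsSymm) (hA0 : ∀ i j, 0 ≤ A i j)
    (d : Fin n → ℝ) (hd : ∀ i, d i = ∑ j, A i j) (hdpos : ∀ i, 0 < d i)
    (α : ℝ) (hα0 : 0 < α) (hα1 : α < 1)
    (v : Fin n → ℝ) (hv0 : ∀ i, 0 ≤ v i) (hv1 : ∑ i, v i = 1)
    (y : Fin n → ℝ) (hy0 : ∀ i, 0 ≤ y i) (r : Fin n → ℝ)
    (hr : r = (diagonal fun i => (d i)⁻¹) *ᵥ v -
      (1 - α • (A * diagonal fun i => (d i)⁻¹)ᵀ) *ᵥ y)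
    (hr0 : ∀ i, 0 ≤ r i)
    (x : Fin n → ℝ) (hx : x = (1 - α) • (diagonal d *ᵥ y)) :
    ∑ i, x i ≤ 1 :=
  push_mass_bound_general A d hd hdpos α v hv1 y r hr hr0 x hx
end

section
/- Let A be a symmetric n×n real nonnegative matrix with positive row sums d_i, D = diag(d_i), P = A D^{-1}, α ∈ (0,1), ρ ∈ [0,1), ε > 0, and v a stochastic vector. Consider the push iteration y⁽⁰⁾ = 0, r⁽⁰⁾ = D^{-1}v, and for each step t < T choose an index j(t) with r⁽ᵗ⁾_{j(t)} ≥ ε, set δ_t = r⁽ᵗ⁾_{j(t)} − ρε, y⁽ᵗ⁺¹⁾ = y⁽ᵗ⁾ + δ_t e_{j(t)}, and r⁽ᵗ⁺¹⁾ = r⁽ᵗ⁾ − δ_t (I − αPᵀ)e_{j(t)}. Then every residual r⁽ᵗ⁾ is entrywise nonnegative, and the degree-weighted pushed mass satisfies (1−α) Σ_{t=0}^{T−1} δ_t d_{j(t)} ≤ 1; consequently Σ_{t=0}^{T−1} d_{j(t)} ≤ 1/(ε(1−α)(1−ρ)). -/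
open Matrix

theorem push_work_bound {n : ℕ} (A : Matrix (Fin n) (Fin n) ℝ)
    (hAsymm : A.IsSymm) (hA0 : ∀ i j, 0 ≤ A i j)
    (d : Fin n → ℝ) (hd : ∀ i, d i = ∑ j, A i j) (hdpos : ∀ i, 0 < d i)
    (α ρ ε : ℝ) (hα0 : 0 < α) (hα1 : α < 1) (hρ0 : 0 ≤ ρ) (hρ1 : ρ < 1) (hε : 0 < ε)
    (v : Fin n → ℝ) (hv0 : ∀ i, 0 ≤ v i) (hv1 : ∑ i, v i = 1)
    (T : ℕ) (j : ℕ → Fin n) (y r : ℕ → Fin n → ℝ)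
    (hy0 : y 0 = 0) (hr0 : r 0 = (diagonal fun i => (d i)⁻¹) *ᵥ v)
    (hbig : ∀ t < T, ε ≤ r t (j t))
    (hyupd : ∀ t < T, y (t + 1) =
      y t + (r t (j t) - ρ * ε) • (Pi.single (j t) 1 : Fin n → ℝ))
    (hrupd : ∀ t < T, r (t + 1) =
      r t - (r t (j t) - ρ * ε) •
        ((1 - α • (A * diagonal fun i => (d i)⁻¹)ᵀ) *ᵥ (Pi.single (j t) 1 : Fin n → ℝ))) :
    (∀ t ≤ T, ∀ i, 0 ≤ r t i) ∧
    (1 - α) * ∑ t ∈ Finset.range T, (r t (j t) - ρ * ε) * d (j t) ≤ 1 ∧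
    ∑ t ∈ Finset.range T, d (j t) ≤ 1 / (ε * (1 - α) * (1 - ρ)) := by
  have hAsymm' : ∀ i k, A i k = A k i := fun i k => by
    have := congrFun (congrFun hAsymm i) k
    simpa [Matrix.transpose_apply] using this.symm
  -- pointwise residual update
  have hr' : ∀ t < T, ∀ i, r (t+1) i =
      r t i - (r t (j t) - ρ*ε) * ((if i = j t then (1:ℝ) else 0) - α * (A (j t) i * (d i)⁻¹)) := by
    intro t ht i
    rw [hrupd t ht]
    simp [Matrix.mulVec_single, Matrix.sub_mulVec, Matrix.smul_mulVec,
      Matrix.one_apply, Matrix.transpose_apply, Matrix.mul_diagonal, sub_mul, mul_sub,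
      Pi.single_apply]
    ring
  -- δ ≥ (1-ρ)ε > 0
  have hδ : ∀ t < T, (1-ρ)*ε ≤ r t (j t) - ρ*ε := by
    intro t ht
    have := hbig t ht
    nlinarith
  have hδ0 : ∀ t < T, 0 ≤ r t (j t) - ρ*ε := by
    intro t ht
    have := hδ t ht
    nlinarith [mul_pos (sub_pos.2 hρ1) hε]
  -- nonnegativity
  have hnn : ∀ t, t ≤ T → ∀ i, 0 ≤ r t i := by
    intro t
    induction t with
    | zero =>
      intro _ i
      rw [hr0]
      simp only [Matrix.mulVec_diagonal]
      exact mul_nonneg (inv_nonneg.2 (hdpos i).le) (hv0 i)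
    | succ t ih =>
      intro hT i
      have ht : t < T := Nat.lt_of_succ_le hT
      rw [hr' t ht i]
      by_cases hij : i = j t
      · subst hij
        rw [if_pos rfl]
        have h1 : 0 ≤ α * (A (j t) (j t) * (d (j t))⁻¹) :=
          mul_nonneg hα0.le (mul_nonneg (hA0 _ _) (inv_nonneg.2 (hdpos _).le))
        have h2 := hδ0 t ht
        have h3 : 0 ≤ ρ * ε := mul_nonneg hρ0 hε.le
        have h4 : α * (A (j t) (j t) * (d (j t))⁻¹) < 1 := by
          have hle : A (j t) (j t) ≤ d (j t) := by
            rw [hd]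
            exact Finset.single_le_sum (fun k _ => hA0 (j t) k) (Finset.mem_univ (j t))
          have : A (j t) (j t) * (d (j t))⁻¹ ≤ 1 := by
            rw [mul_inv_le_iff₀ (hdpos _)]
            simpa using hle
          nlinarith
        nlinarith
      · simp only [if_neg hij]
        have h1 : 0 ≤ α * (A (j t) i * (d i)⁻¹) :=
          mul_nonneg hα0.le (mul_nonneg (hA0 _ _) (inv_nonneg.2 (hdpos i).le))
        have h2 := hδ0 t ht
        have h3 := ih ht.le i
        nlinarith
  -- weighted sum telescoping
  have hW : ∀ t, t ≤ T → ∑ i, d i * r t i =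
      1 - (1-α) * ∑ s ∈ Finset.range t, (r s (j s) - ρ*ε) * d (j s) := by
    intro t
    induction t with
    | zero =>
      intro _
      rw [hr0]
      simp only [Matrix.mulVec_diagonal, Finset.range_zero, Finset.sum_empty, mul_zero, sub_zero]
      have h : ∀ i, d i * ((d i)⁻¹ * v i) = v i := fun i => by
        field_simp [(hdpos i).ne']
      rw [Finset.sum_congr rfl (fun i _ => h i), hv1]
    | succ t ih =>
      intro hT
      have ht : t < T := Nat.lt_of_succ_le hT
      have key : ∑ i, d i * r (t+1) i =
          (∑ i, d i * r t i) - (1-α) * ((r t (j t) - ρ*ε) * d (j t)) := by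
        have expand : ∀ i, d i * r (t+1) i =
            d i * r t i - (r t (j t) - ρ*ε) * (d i * (if i = j t then (1:ℝ) else 0))
              + (r t (j t) - ρ*ε) * α * (d i * (A (j t) i * (d i)⁻¹)) := by
          intro i; rw [hr' t ht i]; ring
        rw [Finset.sum_congr rfl (fun i _ => expand i), Finset.sum_add_distrib,
          Finset.sum_sub_distrib]
        have s1 : ∑ i, (r t (j t) - ρ*ε) * (d i * (if i = j t then (1:ℝ) else 0))
            = (r t (j t) - ρ*ε) * d (j t) := by
          simp [mul_ite, Finset.sum_ite_eq']
        have s2 : ∑ i, (r t (j t) - ρ*ε) * α * (d i * (A (j t) i * (d i)⁻¹))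
            = (r t (j t) - ρ*ε) * α * d (j t) := by
          have h : ∀ i, d i * (A (j t) i * (d i)⁻¹) = A (j t) i := fun i => by
            field_simp [(hdpos i).ne']
          rw [← Finset.mul_sum, Finset.sum_congr rfl (fun i _ => h i), ← hd]
        rw [s1, s2]; ring
      rw [key, ih ht.le, Finset.sum_range_succ]; ring
  have hWT := hW T le_rfl
  have hpos : 0 ≤ ∑ i, d i * r T i :=
    Finset.sum_nonneg fun i _ => mul_nonneg (hdpos i).le (hnn T le_rfl i)
  have h2 : (1 - α) * ∑ t ∈ Finset.range T, (r t (j t) - ρ * ε) * d (j t) ≤ 1 := by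
    rw [hWT] at hpos; linarith
  refine ⟨hnn, h2, ?_⟩
  have hlb : ∀ t ∈ Finset.range T, (1-ρ)*ε * d (j t) ≤ (r t (j t) - ρ*ε) * d (j t) := by
    intro t ht
    exact mul_le_mul_of_nonneg_right (hδ t (Finset.mem_range.1 ht)) (hdpos _).le
  have h3 : (1-α) * ((1-ρ)*ε * ∑ t ∈ Finset.range T, d (j t)) ≤ 1 := by
    have := Finset.sum_le_sum hlb
    rw [← Finset.mul_sum] at this
    nlinarith [Finset.sum_nonneg (fun t (ht : t ∈ Finset.range T) =>
      (mul_nonneg (hδ0 t (Finset.mem_range.1 ht)) (hdpos (j t)).le))]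
  have hc : 0 < ε * (1 - α) * (1 - ρ) :=
    mul_pos (mul_pos hε (sub_pos.2 hα1)) (sub_pos.2 hρ1)
  rw [le_div_iff₀ hc]
  nlinarith
end

section
/- Under the push iteration of the previous statement, if in addition every degree satisfies d_i ≥ 1, then the total number of push steps T that can be performed (each on a residual entry of value at least ε, leaving ρε behind) satisfies T ≤ 1/(ε(1−α)(1−ρ)). In particular, the number of nonzero entries of the solution iterate y⁽ᵀ⁾ and the number of indices ever holding a residual value ≥ ε are both at most 1/(ε(1−α)(1−ρ)). -/
/-!
Weight the residual by the degrees. A push at `k` of size `δ = r k - ρ ε ≥ (1 - ρ) ε` lowers the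
mass `∑ i, d i * r i` by exactly `(1 - α) δ d k ≥ (1 - α) (1 - ρ) ε` and keeps the residual
nonnegative. The initial mass is `∑ i, v i = 1`, so the `T` pushes and the `R` final entries that
are at least `ε` satisfy `(1 - α) (1 - ρ) ε T + ε R ≤ 1`. The support of `y` consists of pushed
indices, and an entry that is never pushed again can only grow, so every index that ever holds
a residual at least `ε` is pushed later or is one of the `R`.
-/

open Matrix Finset

theorem setOf_ne_zero_subset_image_of_add_single {ι R : Type*} [DecidableEq ι] [Semiring R]
    {T : ℕ} {j : ℕ → ι} {y : ℕ → ι → R} (c : ℕ → R) (hy0 : y 0 = 0)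
    (hy : ∀ t < T, y (t + 1) = y t + c t • Pi.single (j t) 1) :
    {i | y T i ≠ 0} ⊆ (range T).image j := by
  suffices ∀ t ≤ T, {i | y t i ≠ 0} ⊆ (range t).image j from this T le_rfl
  intro t
  induction t with
  | zero => simp [hy0]
  | succ t ih =>
    intro ht i hi
    by_cases hit : i = j t
    · exact hit ▸ mem_image_of_mem j (self_mem_range_succ t)
    · have : y t i ≠ 0 := by simpa [hy t ht, Pi.single_eq_of_ne hit] using hi
      have := ih (Nat.le_of_succ_le ht) this
      simp only [coe_image, coe_range, Set.mem_image, Set.mem_Iio] at this ⊢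
      obtain ⟨s, hs, rfl⟩ := this
      exact ⟨s, hs.trans t.lt_succ_self, rfl⟩

variable {ι : Type*} [Fintype ι] [DecidableEq ι]

noncomputable def pushResidual (A : Matrix ι ι ℝ) (d : ι → ℝ) (α : ℝ) (k : ι) (δ : ℝ)
    (r : ι → ℝ) : ι → ℝ :=
  r - δ • ((1 - α • (A * diagonal fun i => (d i)⁻¹)ᵀ) *ᵥ Pi.single k 1)

section pushResidual

variable {A : Matrix ι ι ℝ} {d : ι → ℝ} {α δ : ℝ} {k : ι} {r : ι → ℝ}

theorem pushResidual_apply (hA : A.IsSymm) (i : ι) :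
    pushResidual A d α k δ r i = r i - δ * ((Pi.single k 1 : ι → ℝ) i - α * (A i k / d i)) := by
  simp only [pushResidual, transpose_mul, diagonal_transpose, mulVec_single, MulOpposite.op_one,
    one_smul, Pi.sub_apply, Pi.smul_apply, col_apply, Matrix.sub_apply, one_apply, eq_comm,
    Matrix.smul_apply, diagonal_mul, transpose_apply, smul_eq_mul, Pi.single_apply, hA.apply k i,
    div_eq_inv_mul]

theorem sum_mul_pushResidual (hA : A.IsSymm) (hd : ∀ i, d i = ∑ j, A i j) (hd0 : ∀ i, d i ≠ 0) :
    ∑ i, d i * pushResidual A d α k δ r i = ∑ i, d i * r i - (1 - α) * δ * d k := by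
  have hcol : ∑ i, A i k = d k := by
    rw [hd k]; exact sum_congr rfl fun i _ => (hA.apply i k).symm
  have hpoint : ∀ i, d i * pushResidual A d α k δ r i =
      d i * r i - δ * (d i * (Pi.single k 1 : ι → ℝ) i) + α * δ * A i k := by
    intro i
    rw [pushResidual_apply hA]
    field_simp [hd0 i]
    ring
  have hsingle : ∑ i, d i * (Pi.single k 1 : ι → ℝ) i = d k := by simp [Pi.single_apply]
  simp only [hpoint, sum_add_distrib, sum_sub_distrib, ← mul_sum, hcol, hsingle]
  ring

theorem le_pushResidual_of_ne (hA : A.IsSymm) (hA0 : ∀ i j, 0 ≤ A i j) (hd0 : ∀ i, 0 ≤ d i)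
    (hα : 0 ≤ α) (hδ : 0 ≤ δ) {i : ι} (hik : i ≠ k) : r i ≤ pushResidual A d α k δ r i := by
  rw [pushResidual_apply hA, Pi.single_eq_of_ne hik]
  have := div_nonneg (hA0 i k) (hd0 i)
  nlinarith [mul_nonneg hδ (mul_nonneg hα this)]

theorem pushResidual_self_nonneg (hA : A.IsSymm) (hA0 : ∀ i j, 0 ≤ A i j) (hd0 : ∀ i, 0 ≤ d i)
    (hα : 0 ≤ α) {c : ℝ} (hc : 0 ≤ c) (hcr : c ≤ r k) :
    0 ≤ pushResidual A d α k (r k - c) r k := by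
  rw [pushResidual_apply hA, Pi.single_eq_same]
  have := div_nonneg (hA0 k k) (hd0 k)
  nlinarith [mul_nonneg (sub_nonneg.2 hcr) (mul_nonneg hα this)]

end pushResidual

def IsPushRun (A : Matrix ι ι ℝ) (d : ι → ℝ) (α ρ ε : ℝ) (j : ℕ → ι) (r : ℕ → ι → ℝ)
    (T : ℕ) : Prop :=
  ∀ t < T, ε ≤ r t (j t) ∧ r (t + 1) = pushResidual A d α (j t) (r t (j t) - ρ * ε) (r t)

namespace IsPushRun

variable {A : Matrix ι ι ℝ} {d : ι → ℝ} {α ρ ε : ℝ} {j : ℕ → ι} {r : ℕ → ι → ℝ} {T : ℕ}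

theorem le_push_amount (h : IsPushRun A d α ρ ε j r T) {t : ℕ} (ht : t < T) :
    (1 - ρ) * ε ≤ r t (j t) - ρ * ε := by
  linarith [(h t ht).1]

theorem push_amount_nonneg (h : IsPushRun A d α ρ ε j r T) (hρ1 : ρ ≤ 1) (hε : 0 ≤ ε) {t : ℕ}
    (ht : t < T) : 0 ≤ r t (j t) - ρ * ε :=
  (mul_nonneg (sub_nonneg.2 hρ1) hε).trans (h.le_push_amount ht)

theorem nonneg (h : IsPushRun A d α ρ ε j r T) (hA : A.IsSymm) (hA0 : ∀ i j, 0 ≤ A i j)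
    (hd0 : ∀ i, 0 ≤ d i) (hα : 0 ≤ α) (hρ0 : 0 ≤ ρ) (hρ1 : ρ ≤ 1) (hε : 0 ≤ ε)
    (h0 : ∀ i, 0 ≤ r 0 i) : ∀ t ≤ T, ∀ i, 0 ≤ r t i := by
  intro t
  induction t with
  | zero => exact fun _ => h0
  | succ t ih =>
    intro ht i
    rw [(h t ht).2]
    by_cases hit : i = j t
    · subst hit
      exact pushResidual_self_nonneg hA hA0 hd0 hα (mul_nonneg hρ0 hε)
        (sub_nonneg.1 (h.push_amount_nonneg hρ1 hε ht))
    · exact (ih (Nat.le_of_succ_le ht) i).trans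
        (le_pushResidual_of_ne hA hA0 hd0 hα (h.push_amount_nonneg hρ1 hε ht) hit)

theorem mass_add_sum_eq (h : IsPushRun A d α ρ ε j r T) (hA : A.IsSymm)
    (hd : ∀ i, d i = ∑ j, A i j) (hd0 : ∀ i, d i ≠ 0) : ∀ t ≤ T,
    ∑ i, d i * r t i + ∑ s ∈ range t, (1 - α) * (r s (j s) - ρ * ε) * d (j s) =
      ∑ i, d i * r 0 i := by
  intro t
  induction t with
  | zero => simp
  | succ t ih =>
    intro ht
    rw [(h t ht).2, sum_mul_pushResidual hA hd hd0, sum_range_succ, ← ih (Nat.le_of_succ_le ht)]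
    ring

theorem le_of_forall_ne (h : IsPushRun A d α ρ ε j r T) (hA : A.IsSymm)
    (hA0 : ∀ i j, 0 ≤ A i j) (hd0 : ∀ i, 0 ≤ d i) (hα : 0 ≤ α) (hρ1 : ρ ≤ 1) (hε : 0 ≤ ε)
    {t : ℕ} (ht : t ≤ T) {i : ι} (hi : ∀ s, t ≤ s → s < T → j s ≠ i) : r t i ≤ r T i := by
  suffices ∀ u, t ≤ u → u ≤ T → r t i ≤ r u i from this T ht le_rfl
  intro u htu
  induction u, htu using Nat.le_induction with
  | base => exact fun _ => le_rfl
  | succ u htu ih =>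
    intro hu
    rw [(h u hu).2]
    exact (ih (Nat.le_of_succ_le hu)).trans (le_pushResidual_of_ne hA hA0 hd0 hα
      (h.push_amount_nonneg hρ1 hε hu) (hi u htu hu).symm)

theorem setOf_exists_le_subset (h : IsPushRun A d α ρ ε j r T) (hA : A.IsSymm)
    (hA0 : ∀ i j, 0 ≤ A i j) (hd0 : ∀ i, 0 ≤ d i) (hα : 0 ≤ α) (hρ1 : ρ ≤ 1) (hε : 0 ≤ ε) :
    {i | ∃ t ≤ T, ε ≤ r t i} ⊆ ↑((range T).image j) ∪ {i | ε ≤ r T i} := by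
  rintro i ⟨t, ht, hti⟩
  by_cases hpushed : ∃ s, t ≤ s ∧ s < T ∧ j s = i
  · obtain ⟨s, -, hs, rfl⟩ := hpushed
    left
    simpa using ⟨s, hs, rfl⟩
  · push Not at hpushed
    exact Or.inr (hti.trans (h.le_of_forall_ne hA hA0 hd0 hα hρ1 hε ht hpushed))

theorem count_le_mass (h : IsPushRun A d α ρ ε j r T) (hA : A.IsSymm)
    (hA0 : ∀ i j, 0 ≤ A i j) (hd : ∀ i, d i = ∑ j, A i j) (hd1 : ∀ i, 1 ≤ d i)
    (hα0 : 0 ≤ α) (hα1 : α ≤ 1) (hρ0 : 0 ≤ ρ) (hρ1 : ρ ≤ 1) (hε : 0 ≤ ε)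
    (h0 : ∀ i, 0 ≤ r 0 i) :
    (1 - α) * (1 - ρ) * ε * T + ε * #{i | ε ≤ r T i} ≤ ∑ i, d i * r 0 i := by
  have hd0 i : 0 < d i := one_pos.trans_le (hd1 i)
  have hrT := h.nonneg hA hA0 (fun i => (hd0 i).le) hα0 hρ0 hρ1 hε h0 T le_rfl
  have hpushes : (1 - α) * (1 - ρ) * ε * T ≤
      ∑ s ∈ range T, (1 - α) * (r s (j s) - ρ * ε) * d (j s) := by
    have hsum := card_nsmul_le_sum (range T)
      (fun s => (1 - α) * (r s (j s) - ρ * ε) * d (j s)) ((1 - α) * (1 - ρ) * ε) fun s hs => by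
        have hs := mem_range.1 hs
        have hα := sub_nonneg.2 hα1
        calc (1 - α) * (1 - ρ) * ε ≤ (1 - α) * (r s (j s) - ρ * ε) := by
              rw [mul_assoc]; exact mul_le_mul_of_nonneg_left (h.le_push_amount hs) hα
          _ ≤ (1 - α) * (r s (j s) - ρ * ε) * d (j s) :=
              le_mul_of_one_le_right (mul_nonneg hα (h.push_amount_nonneg hρ1 hε hs)) (hd1 _)
    rw [card_range, nsmul_eq_mul] at hsum
    linarith
  have hremaining : ε * #{i | ε ≤ r T i} ≤ ∑ i, d i * r T i := by
    calc ε * #{i | ε ≤ r T i} = ∑ i with ε ≤ r T i, ε := by simp [mul_comm]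
      _ ≤ ∑ i with ε ≤ r T i, d i * r T i :=
          sum_le_sum fun i hi => (mem_filter.1 hi).2.trans
            (le_mul_of_one_le_left (hrT i) (hd1 i))
      _ ≤ ∑ i, d i * r T i :=
          sum_le_sum_of_subset_of_nonneg (filter_subset _ _)
            fun i _ _ => mul_nonneg (hd0 i).le (hrT i)
  rw [← h.mass_add_sum_eq hA hd (fun i => (hd0 i).ne') T le_rfl]
  linarith

end IsPushRun

theorem push_step_count_bound {n : ℕ} (A : Matrix (Fin n) (Fin n) ℝ)
    (hAsymm : A.IsSymm) (hA0 : ∀ i j, 0 ≤ A i j)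
    (d : Fin n → ℝ) (hd : ∀ i, d i = ∑ j, A i j) (hd1 : ∀ i, 1 ≤ d i)
    (α ρ ε : ℝ) (hα0 : 0 < α) (hα1 : α < 1) (hρ0 : 0 ≤ ρ) (hρ1 : ρ < 1) (hε : 0 < ε)
    (v : Fin n → ℝ) (hv0 : ∀ i, 0 ≤ v i) (hv1 : ∑ i, v i = 1)
    (T : ℕ) (j : ℕ → Fin n) (y r : ℕ → Fin n → ℝ)
    (hy0 : y 0 = 0) (hr0 : r 0 = (diagonal fun i => (d i)⁻¹) *ᵥ v)
    (hbig : ∀ t < T, ε ≤ r t (j t))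
    (hyupd : ∀ t < T, y (t + 1) =
      y t + (r t (j t) - ρ * ε) • (Pi.single (j t) 1 : Fin n → ℝ))
    (hrupd : ∀ t < T, r (t + 1) =
      r t - (r t (j t) - ρ * ε) •
        ((1 - α • (A * diagonal fun i => (d i)⁻¹)ᵀ) *ᵥ (Pi.single (j t) 1 : Fin n → ℝ))) :
    (T : ℝ) ≤ 1 / (ε * (1 - α) * (1 - ρ)) ∧
    ({i : Fin n | y T i ≠ 0}.ncard : ℝ) ≤ 1 / (ε * (1 - α) * (1 - ρ)) ∧
    ({i : Fin n | ∃ t ≤ T, ε ≤ r t i}.ncard : ℝ) ≤ 1 / (ε * (1 - α) * (1 - ρ)) := by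
  have hrun : IsPushRun A d α ρ ε j r T := fun t ht => ⟨hbig t ht, hrupd t ht⟩
  have hd0 i : 0 < d i := one_pos.trans_le (hd1 i)
  have hr0_apply i : r 0 i = (d i)⁻¹ * v i := by simp [hr0, mulVec_diagonal]
  have hmass0 : ∑ i, d i * r 0 i = 1 := by
    simp_rw [hr0_apply, mul_inv_cancel_left₀ (hd0 _).ne', hv1]
  have hcount := hrun.count_le_mass hAsymm hA0 hd hd1 hα0.le hα1.le hρ0 hρ1.le hε.le
    (fun i => by rw [hr0_apply]; exact mul_nonneg (inv_nonneg.2 (hd0 i).le) (hv0 i))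
  rw [hmass0] at hcount
  set R := #{i | ε ≤ r T i}
  have hbound : (T + R : ℝ) ≤ 1 / (ε * (1 - α) * (1 - ρ)) := by
    rw [le_div_iff₀ (mul_pos (mul_pos hε (sub_pos.2 hα1)) (sub_pos.2 hρ1))]
    have hc : ε * (1 - α) * (1 - ρ) ≤ ε := by
      nlinarith [mul_nonneg hα0.le (sub_nonneg.2 hρ1.le), mul_nonneg hε.le hρ0]
    nlinarith [mul_le_mul_of_nonneg_left hc R.cast_nonneg]
  have hpushed : ((range T).image j).card ≤ T := card_image_le.trans (card_range T).le
  refine ⟨?_, ?_, ?_⟩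
  · refine le_trans ?_ hbound
    simp
  · refine le_trans ?_ hbound
    have := Set.ncard_le_ncard (setOf_ne_zero_subset_image_of_add_single _ hy0 hyupd)
    rw [Set.ncard_coe_finset] at this
    exact_mod_cast (this.trans hpushed).trans (Nat.le_add_right T R)
  · refine le_trans ?_ hbound
    have := (Set.ncard_le_ncard (hrun.setOf_exists_le_subset hAsymm hA0 (fun i => (hd0 i).le)
      hα0.le hρ1.le hε.le)).trans (Set.ncard_union_le _ _)
    have hR : {i | ε ≤ r T i}.ncard = R := by simp [R, Set.ncard_eq_toFinset_card']
    rw [Set.ncard_coe_finset, hR] at this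
    exact_mod_cast this.trans (Nat.add_le_add_right hpushed R)
end

section
/- Let L be a finite list of n distinct elements, let 0 ≤ j − Δ ≤ j < n, and let L' be the list obtained from L by removing the element a at position j and reinserting it at position j − Δ (so positions j − Δ, …, j − 1 of L shift to positions j − Δ + 1, …, j of L', and all other positions are unchanged). Then: (i) for every m ≤ j − Δ, the set of the first m elements of L' equals the set of the first m elements of L; (ii) for every m > j, the set of the first m elements of L' equals the set of the first m elements of L; and (iii) for every m with j − Δ < m ≤ j, the set of the first m elements of L' equals the set of the first m − 1 elements of L together with {a}. -/
private lemma insertIdx_at_length {α : Type*} (A X : List α) (a : α) :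
    (A ++ X).insertIdx A.length a = A ++ a :: X := by
  induction A with
  | nil => simp
  | cons h t ih => simp [List.insertIdx_succ_cons, ih]

theorem sweep_prefix_sets_update {α : Type*} [DecidableEq α]
    (L : List α) (hL : L.Nodup) (j Δ : ℕ) (hΔ : Δ ≤ j) (hj : j < L.length)
    (L' : List α) (hL' : L' = (L.eraseIdx j).insertIdx (j - Δ) (L.get ⟨j, hj⟩)) :
    (∀ m ≤ j - Δ, (L'.take m).toFinset = (L.take m).toFinset) ∧
    (∀ m > j, (L'.take m).toFinset = (L.take m).toFinset) ∧
    (∀ m, j - Δ < m → m ≤ j →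
      (L'.take m).toFinset = insert (L.get ⟨j, hj⟩) (L.take (m - 1)).toFinset) := by
  subst hL'
  set a := L.get ⟨j, hj⟩ with ha
  set k := j - Δ with hk
  set A := L.take k with hA
  set B := (L.take j).drop k with hB
  set C := L.drop (j + 1) with hC
  have hkj : k ≤ j := by omega
  have hAlen : A.length = k := by
    rw [hA, List.length_take]; omega
  have hAB : A ++ B = L.take j := by
    rw [hA, hB]
    have h : List.take k L = (L.take j).take k := by
      rw [List.take_take, min_eq_left hkj]
    rw [h, List.take_append_drop]
  have hBlen : B.length = Δ := by
    have := congrArg List.length hAB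
    simp [List.length_append, hAlen, List.length_take] at this
    omega
  have hdropj : L.drop j = a :: C := by
    rw [hC, ha, List.get_eq_getElem]
    exact List.drop_eq_getElem_cons hj
  have hLdec : L = A ++ B ++ a :: C := by
    rw [hAB, ← hdropj, List.take_append_drop]
  have hErase : L.eraseIdx j = A ++ (B ++ C) := by
    rw [List.eraseIdx_eq_take_drop_succ, ← hAB, ← hC, List.append_assoc]
  have hIns : (L.eraseIdx j).insertIdx k a = A ++ a :: (B ++ C) := by
    rw [hErase, ← hAlen, insertIdx_at_length]
  rw [hIns]
  refine ⟨?_, ?_, ?_⟩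
  · intro m hm
    have h1 : (A ++ a :: (B ++ C)).take m = A.take m := by
      rw [List.take_append]
      have : m - A.length = 0 := by omega
      simp [this]
    have h2 : L.take m = A.take m := by
      rw [hA, List.take_take, min_eq_left (by omega : m ≤ k)]
    rw [h1, h2]
  · intro m hm
    have h1 : (A ++ a :: (B ++ C)).take m = A ++ a :: (B ++ C.take (m - k - 1 - Δ)) := by
      rw [List.take_append, List.take_of_length_le (by omega),
        hAlen]
      obtain ⟨p, hp⟩ : ∃ p, m - k = p + 1 := ⟨m - k - 1, by omega⟩
      rw [hp, List.take_cons, List.take_append,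
        List.take_of_length_le (by omega), hBlen]
      congr 3
      omega
    have h2 : L.take m = A ++ B ++ a :: C.take (m - j - 1) := by
      conv_lhs => rw [hLdec]
      rw [List.take_append,
        List.take_of_length_le (by simp [hAlen, hBlen]; omega)]
      have hlen : (A ++ B).length = j := by simp [hAlen, hBlen]; omega
      rw [hlen]
      obtain ⟨p, hp⟩ : ∃ p, m - j = p + 1 := ⟨m - j - 1, by omega⟩
      rw [hp, List.take_cons]
      congr 3
      omega
    have he : m - k - 1 - Δ = m - j - 1 := by omega
    rw [h1, h2, he]
    ext x
    simp
  · intro m hm1 hm2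
    have h1 : (A ++ a :: (B ++ C)).take m = A ++ a :: B.take (m - k - 1) := by
      rw [List.take_append, List.take_of_length_le (by omega),
        hAlen]
      obtain ⟨p, hp⟩ : ∃ p, m - k = p + 1 := ⟨m - k - 1, by omega⟩
      rw [hp, List.take_cons, List.take_append]
      have : p - B.length = 0 := by omega
      simp [this]
      omega
    have h2 : L.take (m - 1) = A ++ B.take (m - 1 - k) := by
      conv_lhs => rw [hLdec]
      rw [List.append_assoc, List.take_append,
        List.take_of_length_le (by omega), hAlen,
        List.take_append]
      have : m - 1 - k - B.length = 0 := by omega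
      simp [this]
    have he : m - 1 - k = m - k - 1 := by omega
    rw [h1, h2, he]
    ext x
    simp
end
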